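/- Let ε ∈ (0,1), μ = ln(ε)/π, and for θ > 0 set p(θ) = 2·arctan(ε^{θ/π}). Then for each fixed natural number i ≥ 0, lim_{θ→0⁺} [arcsin(sin(p(θ))·cos(i·θ)) − arcsin(sin(p(θ))·cos((i+1)·θ))] / arcsin(sin(p(θ))·sin(θ)) = √((i+1)² + μ²) − √(i² + μ²). -/

import Mathlib

open Real Filter Topology
open Real Filter Topology

private lemma sin_two_arctan' (u : ℝ) : Real.sin (2 * Real.arctan u) = 2 * u / (1 + u ^ 2) := by
  have h : Real.sqrt (1 + u ^ 2) ^ 2 = 1 + u ^ 2 := Real.sq_sqrt (by positivity)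
  have h0 : Real.sqrt (1 + u ^ 2) ≠ 0 := by positivity
  rw [Real.sin_two_mul, Real.sin_arctan, Real.cos_arctan]
  field_simp
  rw [h]

private lemma slope_lim {f : ℝ → ℝ} {d : ℝ} (hd : HasDerivAt f d 0) (h0 : f 0 = 0) :
    Tendsto (fun θ : ℝ => f θ / θ) (nhdsWithin 0 (Set.Ioi 0)) (nhds d) := by
  have h1 := hasDerivAt_iff_tendsto_slope.1 hd
  have h2 : Tendsto (slope f 0) (nhdsWithin 0 (Set.Ioi 0)) (nhds d) :=
    h1.mono_left (nhdsWithin_mono 0 fun x hx => ne_of_gt hx)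
  refine h2.congr fun x => ?_
  simp [slope_def_field, h0]

private lemma tendsto_id_div_sin :
    Tendsto (fun x : ℝ => x / Real.sin x) (nhdsWithin 0 {(0:ℝ)}ᶜ) (nhds 1) := by
  have h1 : Tendsto (fun x : ℝ => Real.sin x / x) (nhdsWithin 0 {(0:ℝ)}ᶜ) (nhds 1) := by
    have h := hasDerivAt_iff_tendsto_slope.1 (Real.hasDerivAt_sin 0)
    rw [Real.cos_zero] at h
    refine h.congr fun x => ?_
    simp [slope_def_field]
  have h2 := h1.inv₀ one_ne_zero
  rw [inv_one] at h2
  refine h2.congr fun x => ?_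
  rw [inv_div]

private lemma one_sub_cos_lim (c : ℝ) :
    Tendsto (fun θ : ℝ => (1 - Real.cos (c * θ)) / θ ^ 2) (nhdsWithin 0 (Set.Ioi 0))
      (nhds (c ^ 2 / 2)) := by
  have hs : Tendsto (fun θ : ℝ => Real.sin (c * θ / 2) / θ) (nhdsWithin 0 (Set.Ioi 0))
      (nhds (c / 2)) := by
    have hd : HasDerivAt (fun θ : ℝ => Real.sin (c * θ / 2)) (c / 2) 0 := by
      have := (((hasDerivAt_id (0:ℝ)).const_mul c).div_const 2).sin
      simpa using this
    exact slope_lim hd (by simp)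
  have h2 : Tendsto (fun θ : ℝ => 2 * (Real.sin (c * θ / 2) / θ) ^ 2)
      (nhdsWithin 0 (Set.Ioi 0)) (nhds (2 * (c / 2) ^ 2)) := (hs.pow 2).const_mul 2
  have heq : ∀ θ : ℝ, 2 * (Real.sin (c * θ / 2) / θ) ^ 2 = (1 - Real.cos (c * θ)) / θ ^ 2 := by
    intro θ
    have hpy := Real.sin_sq_add_cos_sq (c * θ / 2)
    have hc := Real.cos_two_mul' (c * θ / 2)
    rw [show 2 * (c * θ / 2) = c * θ by ring] at hc
    rw [div_pow, hc]
    rw [show Real.cos (c * θ / 2) ^ 2 = 1 - Real.sin (c * θ / 2) ^ 2 by linarith]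
    ring
  have : (2 * (c / 2) ^ 2) = c ^ 2 / 2 := by ring
  rw [this] at h2
  exact h2.congr heq

private lemma one_sub_exp_lim (μ : ℝ) :
    Tendsto (fun θ : ℝ => (1 - Real.exp (μ * θ)) / θ) (nhdsWithin 0 (Set.Ioi 0)) (nhds (-μ)) := by
  have hd : HasDerivAt (fun θ : ℝ => 1 - Real.exp (μ * θ)) (-μ) 0 := by
    have := (((hasDerivAt_id (0:ℝ)).const_mul μ).exp).const_sub 1
    simpa using this
  exact slope_lim hd (by simp)

private lemma s_facts (μ : ℝ) (hμ : μ < 0) :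
    Tendsto (fun θ : ℝ => Real.sin (2 * Real.arctan (Real.exp (μ * θ))))
      (nhdsWithin 0 (Set.Ioi 0)) (nhds 1) := by
  have ht : Tendsto (fun θ : ℝ => Real.exp (μ * θ)) (nhdsWithin 0 (Set.Ioi 0)) (nhds 1) := by
    refine Tendsto.mono_left ?_ nhdsWithin_le_nhds
    have : Continuous fun θ : ℝ => Real.exp (μ * θ) := by continuity
    simpa using this.tendsto 0
  have hc : Continuous fun u : ℝ => Real.sin (2 * Real.arctan u) :=
    Real.continuous_sin.comp (continuous_const.mul Real.continuous_arctan)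
  have h := (hc.tendsto 1).comp ht
  have hv : Real.sin (2 * Real.arctan 1) = 1 := by rw [sin_two_arctan']; norm_num
  rw [hv] at h
  exact h

private lemma s_lt_one {μ : ℝ} (hμ : μ < 0) {θ : ℝ} (hθ : 0 < θ) :
    Real.sin (2 * Real.arctan (Real.exp (μ * θ))) < 1 := by
  rw [sin_two_arctan']
  set t := Real.exp (μ * θ)
  have ht1 : t < 1 := by
    rw [Real.exp_lt_one_iff]
    exact mul_neg_of_neg_of_pos hμ hθ
  have htpos : 0 < t := Real.exp_pos _
  rw [div_lt_one (by positivity)]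
  nlinarith

private lemma s_pos {μ θ : ℝ} : 0 < Real.sin (2 * Real.arctan (Real.exp (μ * θ))) := by
  rw [sin_two_arctan']
  have : 0 < Real.exp (μ * θ) := Real.exp_pos _
  positivity

private lemma one_sub_x_lim (μ : ℝ) (hμ : μ < 0) (c : ℝ) :
    Tendsto (fun θ : ℝ =>
        (1 - Real.sin (2 * Real.arctan (Real.exp (μ * θ))) * Real.cos (c * θ)) / θ ^ 2)
      (nhdsWithin 0 (Set.Ioi 0)) (nhds ((c ^ 2 + μ ^ 2) / 2)) := by
  have hA : Tendsto (fun θ : ℝ =>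
      ((1 - Real.exp (μ * θ)) / θ) ^ 2 * (1 + Real.exp (μ * θ) ^ 2)⁻¹)
      (nhdsWithin 0 (Set.Ioi 0)) (nhds (μ ^ 2 / 2)) := by
    have h1 := (one_sub_exp_lim μ).pow 2
    have ht : Tendsto (fun θ : ℝ => (1 + Real.exp (μ * θ) ^ 2)⁻¹) (nhdsWithin 0 (Set.Ioi 0))
        (nhds ((1 + 1)⁻¹)) := by
      refine Tendsto.mono_left ?_ nhdsWithin_le_nhds
      have : Continuous fun θ : ℝ => (1 + Real.exp (μ * θ) ^ 2)⁻¹ := by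
        apply Continuous.inv₀
        · continuity
        · intro x; positivity
      simpa using this.tendsto 0
    have := h1.mul ht
    have he : (-μ) ^ 2 * (1 + 1)⁻¹ = μ ^ 2 / 2 := by ring
    rwa [he] at this
  have hB : Tendsto (fun θ : ℝ =>
      Real.sin (2 * Real.arctan (Real.exp (μ * θ))) * ((1 - Real.cos (c * θ)) / θ ^ 2))
      (nhdsWithin 0 (Set.Ioi 0)) (nhds (c ^ 2 / 2)) := by
    have := (s_facts μ hμ).mul (one_sub_cos_lim c)
    simpa using this
  have h := hA.add hB
  have he : μ ^ 2 / 2 + c ^ 2 / 2 = (c ^ 2 + μ ^ 2) / 2 := by ring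
  rw [he] at h
  refine h.congr fun θ => ?_
  have hd : (0:ℝ) < 1 + Real.exp (μ * θ) ^ 2 := by positivity
  rw [sin_two_arctan']
  field_simp
  ring

private lemma x_abs_le (μ c θ : ℝ) :
    |Real.sin (2 * Real.arctan (Real.exp (μ * θ))) * Real.cos (c * θ)| ≤ 1 := by
  rw [abs_mul]
  exact mul_le_one₀ (Real.abs_sin_le_one _) (abs_nonneg _) (Real.abs_cos_le_one _)

private lemma x_abs_lt {μ : ℝ} (hμ : μ < 0) {θ : ℝ} (hθ : 0 < θ) (c : ℝ) :
    |Real.sin (2 * Real.arctan (Real.exp (μ * θ))) * Real.cos (c * θ)| < 1 := by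
  calc |Real.sin (2 * Real.arctan (Real.exp (μ * θ))) * Real.cos (c * θ)|
      ≤ |Real.sin (2 * Real.arctan (Real.exp (μ * θ)))| := by
        rw [abs_mul]
        exact mul_le_of_le_one_right (abs_nonneg _) (Real.abs_cos_le_one _)
    _ = Real.sin (2 * Real.arctan (Real.exp (μ * θ))) := abs_of_pos s_pos
    _ < 1 := s_lt_one hμ hθ

private lemma x_lt_one {μ : ℝ} (hμ : μ < 0) {θ : ℝ} (hθ : 0 < θ) (c : ℝ) :
    Real.sin (2 * Real.arctan (Real.exp (μ * θ))) * Real.cos (c * θ) < 1 := by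
  calc Real.sin (2 * Real.arctan (Real.exp (μ * θ))) * Real.cos (c * θ)
      ≤ |Real.sin (2 * Real.arctan (Real.exp (μ * θ))) * Real.cos (c * θ)| := le_abs_self _
    _ ≤ |Real.sin (2 * Real.arctan (Real.exp (μ * θ)))| := by
        rw [abs_mul]
        exact mul_le_of_le_one_right (abs_nonneg _) (Real.abs_cos_le_one _)
    _ = Real.sin (2 * Real.arctan (Real.exp (μ * θ))) := abs_of_pos s_pos
    _ < 1 := s_lt_one hμ hθ

private lemma arccos_lim (μ : ℝ) (hμ : μ < 0) (c : ℝ) :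
    Tendsto (fun θ : ℝ =>
        Real.arccos (Real.sin (2 * Real.arctan (Real.exp (μ * θ))) * Real.cos (c * θ)) / θ)
      (nhdsWithin 0 (Set.Ioi 0)) (nhds (Real.sqrt (c ^ 2 + μ ^ 2))) := by
  set x : ℝ → ℝ := fun θ => Real.sin (2 * Real.arctan (Real.exp (μ * θ))) * Real.cos (c * θ)
    with hx
  -- sin (arccos (x θ)) / θ → √(c²+μ²)
  have hF : Tendsto (fun θ : ℝ => Real.sin (Real.arccos (x θ)) / θ)
      (nhdsWithin 0 (Set.Ioi 0)) (nhds (Real.sqrt (c ^ 2 + μ ^ 2))) := by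
    have hx1 : Tendsto x (nhdsWithin 0 (Set.Ioi 0)) (nhds 1) := by
      have hc : Tendsto (fun θ : ℝ => Real.cos (c * θ)) (nhdsWithin 0 (Set.Ioi 0)) (nhds 1) := by
        refine Tendsto.mono_left ?_ nhdsWithin_le_nhds
        have : Continuous fun θ : ℝ => Real.cos (c * θ) := by continuity
        simpa using this.tendsto 0
      simpa using (s_facts μ hμ).mul hc
    have hq : Tendsto (fun θ : ℝ => (1 - x θ ^ 2) / θ ^ 2) (nhdsWithin 0 (Set.Ioi 0))
        (nhds (c ^ 2 + μ ^ 2)) := by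
      have := (one_sub_x_lim μ hμ c).mul (hx1.const_add 1)
      have he : (c ^ 2 + μ ^ 2) / 2 * (1 + 1) = c ^ 2 + μ ^ 2 := by ring
      rw [he] at this
      refine this.congr fun θ => ?_
      simp only [hx]
      ring
    have hsq := ((Real.continuous_sqrt.tendsto _).comp hq)
    refine hsq.congr' ?_
    filter_upwards [self_mem_nhdsWithin] with θ hθ
    have hθ : (0:ℝ) < θ := hθ
    have h1x : 0 ≤ 1 - x θ ^ 2 := by
      have h1 := x_abs_lt hμ hθ c
      have : x θ ^ 2 < 1 := by
        rw [← sq_abs]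
        exact pow_lt_one₀ (abs_nonneg _) h1 two_ne_zero
      linarith
    rw [Function.comp_apply, Real.sin_arccos, Real.sqrt_div h1x, Real.sqrt_sq hθ.le]
  -- arccos (x θ) → 0 within ≠ 0
  have hA : Tendsto (fun θ : ℝ => Real.arccos (x θ)) (nhdsWithin 0 (Set.Ioi 0))
      (nhdsWithin 0 {(0:ℝ)}ᶜ) := by
    rw [tendsto_nhdsWithin_iff]
    constructor
    · have hx1 : Tendsto x (nhdsWithin 0 (Set.Ioi 0)) (nhds 1) := by
        have hc : Tendsto (fun θ : ℝ => Real.cos (c * θ)) (nhdsWithin 0 (Set.Ioi 0)) (nhds 1) := by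
          refine Tendsto.mono_left ?_ nhdsWithin_le_nhds
          have : Continuous fun θ : ℝ => Real.cos (c * θ) := by continuity
          simpa using this.tendsto 0
        simpa using (s_facts μ hμ).mul hc
      have := (Real.continuous_arccos.tendsto 1).comp hx1
      simpa [Function.comp_def] using this
    · filter_upwards [self_mem_nhdsWithin] with θ hθ
      have : 0 < Real.arccos (x θ) := Real.arccos_pos.2 (x_lt_one hμ hθ c)
      exact ne_of_gt this
  have hratio := tendsto_id_div_sin.comp hA
  have := hratio.mul hF
  rw [one_mul] at this
  refine this.congr' ?_
  filter_upwards [self_mem_nhdsWithin] with θ hθ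
  have hθ : (0:ℝ) < θ := hθ
  have hsin : Real.sin (Real.arccos (x θ)) ≠ 0 := by
    rw [Real.sin_arccos]
    have h1 := x_abs_lt hμ hθ c
    have : 0 < 1 - x θ ^ 2 := by
      have : x θ ^ 2 < 1 := by
        rw [← sq_abs]
        exact pow_lt_one₀ (abs_nonneg _) h1 two_ne_zero
      linarith
    positivity
  rw [Function.comp_apply]
  field_simp
  simp only [hx]
  ring_nf

private lemma arcsin_lim (μ : ℝ) (hμ : μ < 0) :
    Tendsto (fun θ : ℝ =>
        Real.arcsin (Real.sin (2 * Real.arctan (Real.exp (μ * θ))) * Real.sin θ) / θ)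
      (nhdsWithin 0 (Set.Ioi 0)) (nhds 1) := by
  set y : ℝ → ℝ := fun θ => Real.sin (2 * Real.arctan (Real.exp (μ * θ))) * Real.sin θ with hy
  have hyabs : ∀ θ, |y θ| ≤ 1 := by
    intro θ
    rw [hy, abs_mul]
    exact mul_le_one₀ (Real.abs_sin_le_one _) (abs_nonneg _) (Real.abs_sin_le_one _)
  have hsinB : ∀ θ, Real.sin (Real.arcsin (y θ)) = y θ := by
    intro θ
    exact Real.sin_arcsin (abs_le.1 (hyabs θ)).1 (abs_le.1 (hyabs θ)).2
  have hyθ : Tendsto (fun θ : ℝ => y θ / θ) (nhdsWithin 0 (Set.Ioi 0)) (nhds 1) := by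
    have h1 : Tendsto (fun θ : ℝ => Real.sin θ / θ) (nhdsWithin 0 (Set.Ioi 0)) (nhds 1) := by
      have := slope_lim (Real.hasDerivAt_sin 0) Real.sin_zero
      rwa [Real.cos_zero] at this
    have := (s_facts μ hμ).mul h1
    rw [one_mul] at this
    refine this.congr fun θ => ?_
    rw [hy]; ring
  have hB : Tendsto (fun θ : ℝ => Real.arcsin (y θ)) (nhdsWithin 0 (Set.Ioi 0))
      (nhdsWithin 0 {(0:ℝ)}ᶜ) := by
    rw [tendsto_nhdsWithin_iff]
    constructor
    · have hy0 : Tendsto y (nhdsWithin 0 (Set.Ioi 0)) (nhds 0) := by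
        refine Tendsto.mono_left ?_ nhdsWithin_le_nhds
        have : Continuous y := by
          rw [hy]
          exact ((Real.continuous_sin.comp (continuous_const.mul Real.continuous_arctan)).comp
            (Real.continuous_exp.comp (continuous_const.mul continuous_id))).mul Real.continuous_sin
        simpa [hy] using this.tendsto 0
      have := (Real.continuous_arcsin.tendsto 0).comp hy0
      simpa [Function.comp_def] using this
    · filter_upwards [Ioo_mem_nhdsGT_of_mem (Set.mem_Ico.2 ⟨le_refl 0, Real.pi_pos⟩)] with θ hθ
      have hypos : 0 < y θ := by
        rw [hy]
        exact mul_pos s_pos (Real.sin_pos_of_pos_of_lt_pi hθ.1 hθ.2)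
      simp only [Set.mem_compl_iff, Set.mem_singleton_iff]
      exact ne_of_gt (Real.arcsin_pos.2 hypos)
  have hratio := tendsto_id_div_sin.comp hB
  have hfin := hratio.mul hyθ
  rw [one_mul] at hfin
  refine hfin.congr' ?_
  filter_upwards [Ioo_mem_nhdsGT_of_mem (Set.mem_Ico.2 ⟨le_refl 0, Real.pi_pos⟩)] with θ hθ
  have hypos : 0 < y θ := by
    rw [hy]
    exact mul_pos s_pos (Real.sin_pos_of_pos_of_lt_pi hθ.1 hθ.2)
  have hsin : Real.sin (Real.arcsin (y θ)) ≠ 0 := by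
    rw [hsinB]
    exact ne_of_gt hypos
  rw [Function.comp_apply, hsinB]
  field_simp
  simp only [hy]
  ring_nf

theorem tendsto_spacing_ratio (ε : ℝ) (hε : ε ∈ Set.Ioo (0 : ℝ) 1) (i : ℕ) :
    Filter.Tendsto
      (fun θ : ℝ =>
        (Real.arcsin (Real.sin (2 * Real.arctan (ε ^ (θ / π))) * Real.cos (i * θ)) -
            Real.arcsin (Real.sin (2 * Real.arctan (ε ^ (θ / π))) * Real.cos ((i + 1) * θ))) /
          Real.arcsin (Real.sin (2 * Real.arctan (ε ^ (θ / π))) * Real.sin θ))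
      (nhdsWithin 0 (Set.Ioi 0))
      (nhds (Real.sqrt (((i : ℝ) + 1) ^ 2 + (Real.log ε / π) ^ 2) -
        Real.sqrt ((i : ℝ) ^ 2 + (Real.log ε / π) ^ 2))) := by
  obtain ⟨hε0, hε1⟩ := hε
  set μ := Real.log ε / π with hμdef
  have hμ : μ < 0 := div_neg_of_neg_of_pos (Real.log_neg hε0 hε1) Real.pi_pos
  have hrw : ∀ θ : ℝ, ε ^ (θ / π) = Real.exp (μ * θ) := by
    intro θ
    rw [Real.rpow_def_of_pos hε0]
    congr 1
    rw [hμdef]; ring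
  have hnum := ((arccos_lim μ hμ ((i : ℝ) + 1)).sub (arccos_lim μ hμ (i : ℝ))).div
    (arcsin_lim μ hμ) one_ne_zero
  rw [div_one] at hnum
  refine hnum.congr' ?_
  filter_upwards [self_mem_nhdsWithin] with θ hθ
  have hθ : (0:ℝ) < θ := hθ
  simp only [hrw]
  rw [Real.arcsin_eq_pi_div_two_sub_arccos
    (Real.sin (2 * Real.arctan (Real.exp (μ * θ))) * Real.cos (↑i * θ)),
    Real.arcsin_eq_pi_div_two_sub_arccos
    (Real.sin (2 * Real.arctan (Real.exp (μ * θ))) * Real.cos ((↑i + 1) * θ))]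
  simp only [Pi.div_apply]
  have key : ∀ a b d : ℝ, (a / θ - b / θ) / (d / θ) = (π / 2 - b - (π / 2 - a)) / d := by
    intro a b d
    rcases eq_or_ne d 0 with hd | hd
    · rw [hd]; simp
    · rw [show π / 2 - b - (π / 2 - a) = a - b by ring, div_sub_div_same,
        div_div_div_cancel_right₀]
      exact ne_of_gt hθ
  exact key _ _ _
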